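/- arXiv:0805.3449 — 5 statements merged into one kernel-verified Lean document; each statement's English description precedes it below -/
import Mathlib

section
/- Let p > q > 0 be coprime integers with Hirzebruch–Jung expansions p/q = [b_1, …, b_s] and p/(p−q) = [a_1, …, a_r], where all b_i ≥ 2 and all a_i ≥ 2. Then r = 1 + Σ_{i=1}^{s} (b_i − 2) and s = 1 + Σ_{i=1}^{r} (a_i − 2). -/
/-!
Put `u = p/q = [b_1, …, b_s]` and `v = p/(p - q) = [a_1, …, a_r]`; then `1/u + 1/v = 1`, i.e.
`(u - 1)(v - 1) = 1`. As all entries are `≥ 2`, `[x, T]` lies in `(x - 1, x)` for nonempty `T`,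
so exactly one of `u < 2`, `u = v = 2`, `v < 2` holds. If `u < 2` then `b_1 = 2` and
`[b_2, …, b_s]` is dual in the same sense to `[a_1 - 1, a_2, …, a_r]`: one entry disappears on
one side and `Σ (a_i - 2)` drops by one on the other, so the length formula follows by induction
on `r + s`; the case `v < 2` is symmetric and `u = v = 2` is `[2]` dual to `[2]`.
-/

/-- Auxiliary: continuant computed from the *front* of the list; applied to the
reversed list it gives the continuant of the paper. -/
def Zrev {R : Type*} [CommRing R] : List R → R
  | [] => 1
  | [x] => x
  | x :: y :: l => x * Zrev (y :: l) - Zrev l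

/-- The continuant polynomial `Z_n(x_1,…,x_n)` (with `Z_{-1}=0`, `Z_0=1`) satisfying
`Z_n(x_1,…,x_n) = x_n·Z_{n-1}(x_1,…,x_{n-1}) - Z_{n-2}(x_1,…,x_{n-2})`. -/
def Zc {R : Type*} [CommRing R] (l : List R) : R := Zrev l.reverse

/-- The Hirzebruch–Jung continued fraction `[x_1,…,x_n] = x_1 - 1/[x_2,…,x_n]`. -/
noncomputable def hj {K : Type*} [Field K] : List K → K
  | [] => 0
  | [x] => x
  | x :: y :: l => x - 1 / hj (y :: l)

/-- The `n×n` tridiagonal matrix `M(x_1,…,x_n)` with diagonal entries `x_i`,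
entries `-1` immediately above and below the diagonal, `0` elsewhere. -/
def triMat {n : ℕ} {R : Type*} [CommRing R] (x : Fin n → R) :
    Matrix (Fin n) (Fin n) R :=
  Matrix.of fun i j =>
    if i = j then x i
    else if (i : ℕ) + 1 = (j : ℕ) ∨ (j : ℕ) + 1 = (i : ℕ) then -1 else 0

/-- A tuple `x ∈ ℕ^n` is admissible if `M(x)` is positive semidefinite of rank `≥ n-1`. -/
def Admissible {n : ℕ} (x : Fin n → ℕ) : Prop :=
  (triMat fun i => (x i : ℝ)).PosSemidef ∧ n - 1 ≤ (triMat fun i => (x i : ℝ)).rank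

section

variable {K : Type*} [Field K]

theorem hj_cons_of_ne_nil (x : K) {T : List K} (hT : T ≠ []) : hj (x :: T) = x - 1 / hj T := by
  cases T with
  | nil => exact absurd rfl hT
  | cons y l => rfl

theorem hj_cons_sub_one (x : K) (T : List K) : hj ((x - 1) :: T) = hj (x :: T) - 1 := by
  cases T with
  | nil => rfl
  | cons y l => simp only [hj]; ring

variable [LinearOrder K] [IsStrictOrderedRing K]

theorem one_lt_hj {L : List K} (hL : ∀ x ∈ L, 2 ≤ x) (hne : L ≠ []) : 1 < hj L := by
  induction L with
  | nil => exact absurd rfl hne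
  | cons x T ih =>
    rw [List.forall_mem_cons] at hL
    rcases eq_or_ne T [] with rfl | hT
    · simp only [hj]; linarith [hL.1]
    · have hw := ih hL.2 hT
      have : 1 / hj T < 1 := (div_lt_one (by linarith)).2 hw
      rw [hj_cons_of_ne_nil x hT]; linarith [hL.1]

theorem hj_cons_le (x : K) {T : List K} (hT : ∀ z ∈ T, 2 ≤ z) : hj (x :: T) ≤ x := by
  rcases eq_or_ne T [] with rfl | hne
  · exact le_refl x
  · have : 0 < 1 / hj T := one_div_pos.2 (by linarith [one_lt_hj hT hne])
    rw [hj_cons_of_ne_nil x hne]; linarith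

theorem sub_one_lt_hj_cons (x : K) {T : List K} (hT : ∀ z ∈ T, 2 ≤ z) (hne : T ≠ []) :
    x - 1 < hj (x :: T) := by
  have hw := one_lt_hj hT hne
  have : 1 / hj T < 1 := (div_lt_one (by linarith)).2 hw
  rw [hj_cons_of_ne_nil x hne]; linarith

theorem hj_cons_lt (x : K) {T : List K} (hT : ∀ z ∈ T, 2 ≤ z) (hne : T ≠ []) :
    hj (x :: T) < x := by
  have : 0 < 1 / hj T := one_div_pos.2 (by linarith [one_lt_hj hT hne])
  rw [hj_cons_of_ne_nil x hne]; linarith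

theorem hj_dual_of_two_cons {T T' : List K} {y : K} (hT : ∀ z ∈ T, 2 ≤ z) (hne : T ≠ [])
    (h : (hj (2 :: T) - 1) * (hj (y :: T') - 1) = 1) :
    (hj T - 1) * (hj ((y - 1) :: T') - 1) = 1 := by
  have hw : hj T ≠ 0 := by linarith [one_lt_hj hT hne]
  rw [hj_cons_of_ne_nil 2 hne] at h
  rw [hj_cons_sub_one]
  field_simp at h
  linarith

end

theorem two_le_of_mem_map_intCast {T : List ℤ} (hT : ∀ z ∈ T, 2 ≤ z) :
    ∀ z ∈ T.map ((↑) : ℤ → ℚ), 2 ≤ z := by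
  simp only [List.forall_mem_map]
  exact fun z hz => by exact_mod_cast hT z hz

theorem eq_two_and_ne_nil_of_hj_lt_two {x : ℤ} {T : List ℤ} (hx : 2 ≤ x) (hT : ∀ z ∈ T, 2 ≤ z)
    (h : hj ((x :: T).map ((↑) : ℤ → ℚ)) < 2) : x = 2 ∧ T ≠ [] := by
  have hne : T ≠ [] := by
    rintro rfl
    have : (2 : ℚ) ≤ x := by exact_mod_cast hx
    simp only [List.map_cons, List.map_nil, hj] at h
    linarith
  rw [List.map_cons] at h
  have hlt := sub_one_lt_hj_cons (x : ℚ) (two_le_of_mem_map_intCast hT) (by simpa using hne)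
  have : x < 3 := by exact_mod_cast (show (x : ℚ) < 3 by linarith)
  exact ⟨by omega, hne⟩

theorem eq_two_and_eq_nil_of_hj_eq_two {x : ℤ} {T : List ℤ} (hT : ∀ z ∈ T, 2 ≤ z)
    (h : hj ((x :: T).map ((↑) : ℤ → ℚ)) = 2) : x = 2 ∧ T = [] := by
  rw [List.map_cons] at h
  rcases eq_or_ne T [] with rfl | hne
  · simp only [List.map_nil, hj] at h
    exact ⟨by exact_mod_cast h, rfl⟩
  · have hne' : T.map ((↑) : ℤ → ℚ) ≠ [] := by simpa using hne
    have h₁ := sub_one_lt_hj_cons (x : ℚ) (two_le_of_mem_map_intCast hT) hne'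
    have h₂ := hj_cons_lt (x : ℚ) (two_le_of_mem_map_intCast hT) hne'
    have h₃ : x < 3 := by exact_mod_cast (show (x : ℚ) < 3 by linarith)
    have h₄ : 2 < x := by exact_mod_cast (show (2 : ℚ) < x by linarith)
    omega

theorem length_eq_one_add_sum_sub_two_of_hj_dual (L L' : List ℤ) (hL : ∀ x ∈ L, 2 ≤ x)
    (hL' : ∀ y ∈ L', 2 ≤ y) (hne : L ≠ []) (hne' : L' ≠ [])
    (hdual : (hj (L.map ((↑) : ℤ → ℚ)) - 1) * (hj (L'.map ((↑) : ℤ → ℚ)) - 1) = 1) :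
    (L'.length : ℤ) = 1 + (L.map (· - 2)).sum := by
  obtain ⟨x, T, rfl⟩ := List.exists_cons_of_ne_nil hne
  obtain ⟨y, T', rfl⟩ := List.exists_cons_of_ne_nil hne'
  rw [List.forall_mem_cons] at hL hL'
  have hu := one_lt_hj (two_le_of_mem_map_intCast (List.forall_mem_cons.2 hL)) (by simp)
  have hv := one_lt_hj (two_le_of_mem_map_intCast (List.forall_mem_cons.2 hL')) (by simp)
  have hv_le : hj ((y :: T').map ((↑) : ℤ → ℚ)) ≤ y :=
    hj_cons_le _ (two_le_of_mem_map_intCast hL'.2)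
  have hu_le : hj ((x :: T).map ((↑) : ℤ → ℚ)) ≤ x :=
    hj_cons_le _ (two_le_of_mem_map_intCast hL.2)
  rcases lt_trichotomy (hj ((x :: T).map ((↑) : ℤ → ℚ))) 2 with hu2 | hu2 | hu2
  · obtain ⟨rfl, hT⟩ := eq_two_and_ne_nil_of_hj_lt_two hL.1 hL.2 hu2
    have hy : 3 ≤ y := by
      have : (2 : ℚ) < y := by nlinarith
      exact_mod_cast this
    have ih := length_eq_one_add_sum_sub_two_of_hj_dual T ((y - 1) :: T') hL.2
      (List.forall_mem_cons.2 ⟨by omega, hL'.2⟩) hT (List.cons_ne_nil _ _) (by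
        simpa using hj_dual_of_two_cons (two_le_of_mem_map_intCast hL.2) (by simpa using hT)
          (by simpa using hdual))
    simp only [List.length_cons, List.map_cons, List.sum_cons] at ih ⊢
    push_cast at ih ⊢
    linarith
  · have hv2 : hj ((y :: T').map ((↑) : ℤ → ℚ)) = 2 := by rw [hu2] at hdual; linarith
    obtain ⟨rfl, rfl⟩ := eq_two_and_eq_nil_of_hj_eq_two hL.2 hu2
    obtain ⟨rfl, rfl⟩ := eq_two_and_eq_nil_of_hj_eq_two hL'.2 hv2
    rfl
  · have hv2 : hj ((y :: T').map ((↑) : ℤ → ℚ)) < 2 := by nlinarith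
    obtain ⟨rfl, hT'⟩ := eq_two_and_ne_nil_of_hj_lt_two hL'.1 hL'.2 hv2
    have hx : 3 ≤ x := by
      have : (2 : ℚ) < x := by linarith
      exact_mod_cast this
    have ih := length_eq_one_add_sum_sub_two_of_hj_dual ((x - 1) :: T) T'
      (List.forall_mem_cons.2 ⟨by omega, hL.2⟩) hL'.2 (List.cons_ne_nil _ _) hT' (by
        rw [mul_comm]
        simpa using hj_dual_of_two_cons (two_le_of_mem_map_intCast hL'.2) (by simpa using hT')
          (by simpa [mul_comm] using hdual))
    simp only [List.length_cons, List.map_cons, List.sum_cons] at ih ⊢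
    push_cast at ih ⊢
    linarith
termination_by L.length + L'.length

theorem sum_map_range'_one_eq_sum_Icc (f : ℕ → ℤ) (s : ℕ) :
    ((List.range' 1 s).map f).sum = ∑ i ∈ Finset.Icc 1 s, f i := by
  rw [← List.toFinset_range'_1_1, List.sum_toFinset _ List.nodup_range']

theorem forall_mem_map_range'_one {f : ℕ → ℤ} {s : ℕ} (hf : ∀ i, 1 ≤ i → i ≤ s → 2 ≤ f i) :
    ∀ x ∈ (List.range' 1 s).map f, 2 ≤ x := by
  simp only [List.forall_mem_map, List.mem_range'_1]
  exact fun i hi => hf i hi.1 (by omega)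

theorem map_range'_one_ne_nil_of_hj_pos {f : ℕ → ℤ} {s : ℕ}
    (h : 0 < hj ((List.range' 1 s).map fun i => (f i : ℚ))) : (List.range' 1 s).map f ≠ [] := by
  rintro hnil
  rw [List.map_eq_nil_iff, List.range'_eq_nil_iff] at hnil
  simp [hnil, hj] at h

theorem length_duality_general (p q : ℤ) (hq : 0 < q) (hpq : q < p)
    (s r : ℕ) (b a : ℕ → ℤ)
    (hb : ∀ i, 1 ≤ i → i ≤ s → 2 ≤ b i)
    (ha : ∀ i, 1 ≤ i → i ≤ r → 2 ≤ a i)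
    (hexpb : (p : ℚ) / (q : ℚ) = hj ((List.range' 1 s).map fun i => (b i : ℚ)))
    (hexpa : (p : ℚ) / ((p : ℚ) - (q : ℚ)) =
      hj ((List.range' 1 r).map fun i => (a i : ℚ))) :
    (r : ℤ) = 1 + ∑ i ∈ Finset.Icc 1 s, (b i - 2) ∧
    (s : ℤ) = 1 + ∑ i ∈ Finset.Icc 1 r, (a i - 2) := by
  have hq' : (0 : ℚ) < q := by exact_mod_cast hq
  have hp' : (0 : ℚ) < p := by exact_mod_cast hq.trans hpq
  have hpq' : (0 : ℚ) < p - q := by rw [sub_pos]; exact_mod_cast hpq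
  have hdual : (hj ((List.range' 1 s).map fun i => (b i : ℚ)) - 1) *
      (hj ((List.range' 1 r).map fun i => (a i : ℚ)) - 1) = 1 := by
    rw [← hexpb, ← hexpa]
    field_simp
    ring
  have hLb := map_range'_one_ne_nil_of_hj_pos (by rw [← hexpb]; positivity)
  have hLa := map_range'_one_ne_nil_of_hj_pos (by rw [← hexpa]; positivity)
  have hb' := forall_mem_map_range'_one hb
  have ha' := forall_mem_map_range'_one ha
  rw [← sum_map_range'_one_eq_sum_Icc, ← sum_map_range'_one_eq_sum_Icc]
  constructor
  · have h := length_eq_one_add_sum_sub_two_of_hj_dual _ _ hb' ha' hLb hLa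
      (by rwa [List.map_map, List.map_map])
    rwa [List.length_map, List.length_range', List.map_map] at h
  · have h := length_eq_one_add_sum_sub_two_of_hj_dual _ _ ha' hb' hLa hLb
      (by rwa [List.map_map, List.map_map, mul_comm])
    rwa [List.length_map, List.length_range', List.map_map] at h

/-- if `p/q = [b_1,…,b_s]` and `p/(p-q) = [a_1,…,a_r]` with all entries `≥ 2`,
then `r = 1 + Σ (b_i - 2)` and `s = 1 + Σ (a_i - 2)`. -/
theorem length_duality (p q : ℤ) (hq : 0 < q) (hpq : q < p) (hcop : IsCoprime p q)
    (s r : ℕ) (b a : ℕ → ℤ)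
    (hb : ∀ i, 1 ≤ i → i ≤ s → 2 ≤ b i)
    (ha : ∀ i, 1 ≤ i → i ≤ r → 2 ≤ a i)
    (hexpb : (p : ℚ) / (q : ℚ) = hj ((List.range' 1 s).map fun i => (b i : ℚ)))
    (hexpa : (p : ℚ) / ((p : ℚ) - (q : ℚ)) =
      hj ((List.range' 1 r).map fun i => (a i : ℚ))) :
    (r : ℤ) = 1 + ∑ i ∈ Finset.Icc 1 s, (b i - 2) ∧
    (s : ℤ) = 1 + ∑ i ∈ Finset.Icc 1 r, (a i - 2) :=
  length_duality_general p q hq hpq s r b a hb ha hexpb hexpa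
end

section
/- If x = (x_1, …, x_n) ∈ ℕ^n is admissible and x' = (x'_1, …, x'_n) ∈ ℕ^n satisfies x'_i ≥ x_i for all i, then x' is admissible. -/
/-!
Raising diagonal entries adds the positive semidefinite matrix `D = diag(x' - x)` to `M(x)`.
A sum of positive semidefinite matrices is positive semidefinite, and if `(A + D) v = 0` then
`v* A v + v* D v = 0` with both terms nonnegative, so `A v = 0`: the kernel can only shrink,
hence the rank can only grow.
-/

open Matrix
open scoped ComplexOrder

namespace Matrix

theorem rank_le_rank_of_ker_le {m m' n K : Type*} [Fintype n] [Field K]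
    {A : Matrix m n K} {B : Matrix m' n K}
    (hker : LinearMap.ker B.mulVecLin ≤ LinearMap.ker A.mulVecLin) : A.rank ≤ B.rank := by
  have hA := LinearMap.finrank_range_add_finrank_ker A.mulVecLin
  have hB := LinearMap.finrank_range_add_finrank_ker B.mulVecLin
  have := Submodule.finrank_mono hker
  rw [rank, rank]
  omega

namespace PosSemidef

variable {n 𝕜 : Type*} [Fintype n] [RCLike 𝕜] {A B : Matrix n n 𝕜}

theorem ker_add_le (hA : A.PosSemidef) (hB : B.PosSemidef) :
    LinearMap.ker (A + B).mulVecLin ≤ LinearMap.ker A.mulVecLin := by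
  intro v hv
  simp only [LinearMap.mem_ker, mulVecLin_apply, add_mulVec] at hv ⊢
  have hsum : star v ⬝ᵥ A *ᵥ v + star v ⬝ᵥ B *ᵥ v = 0 := by
    rw [← dotProduct_add, hv, dotProduct_zero]
  have hAv : star v ⬝ᵥ A *ᵥ v = 0 :=
    (add_eq_zero_iff_of_nonneg (hA.dotProduct_mulVec_nonneg v)
      (hB.dotProduct_mulVec_nonneg v)).mp hsum |>.1
  exact (hA.dotProduct_mulVec_zero_iff v).mp hAv

theorem rank_le_rank_add (hA : A.PosSemidef) (hB : B.PosSemidef) : A.rank ≤ (A + B).rank :=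
  rank_le_rank_of_ker_le (hA.ker_add_le hB)

end PosSemidef

end Matrix

theorem triMat_add_diagonal {n : ℕ} {R : Type*} [CommRing R] (x d : Fin n → R) :
    triMat (x + d) = triMat x + diagonal d := by
  ext i j
  by_cases hij : i = j <;> simp [triMat, hij]

/-- if `x ∈ ℕ^n` is admissible and `x'_i ≥ x_i` for all `i`,
then `x'` is admissible. -/
theorem admissible_mono (n : ℕ) (x x' : Fin n → ℕ)
    (hx : Admissible x) (h : ∀ i, x i ≤ x' i) :
    Admissible x' := by
  obtain ⟨hpsd, hrank⟩ := hx
  set d : Fin n → ℝ := fun i => (x' i : ℝ) - x i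
  have hd : (diagonal d).PosSemidef :=
    PosSemidef.diagonal fun i => sub_nonneg.mpr (Nat.cast_le.mpr (h i))
  have hM : (triMat fun i => (x' i : ℝ)) = triMat (fun i => (x i : ℝ)) + diagonal d := by
    rw [← triMat_add_diagonal]
    congr 1
    ext i
    simp [d]
  rw [Admissible, hM]
  exact ⟨hpsd.add hd, hrank.trans (hpsd.rank_le_rank_add hd)⟩
end

section
/- Let x = (x_1, …, x_n) ∈ ℕ^n be admissible, and let ν_0, ν_1, …, ν_{n+1} be integers satisfying ν_{i+1} ≥ x_i·ν_i − ν_{i-1} for all 1 ≤ i ≤ n. Then for every 1 ≤ i ≤ n one has ν_{i+1} ≥ Z_i(x_i, x_{i-1}, …, x_1)·ν_1 − Z_{i-1}(x_i, x_{i-1}, …, x_2)·ν_0. -/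
/-!
Write `Z(y₁,…,y_m)` for the continuant expanded from the front,
`Z(y₁,…,y_m) = y₁·Z(y₂,…,y_m) − Z(y₃,…,y_m)`. Multiplying the first recurrence inequality
`x₁ν₁ − ν₀ ≤ ν₂` by `Z(x₂,…,x_i)` and adding the claim for the shifted sequence `ν₁, ν₂, …`
(with `x₂,…,x_i`) gives the claim by induction; the weights only have to be nonnegative.
They are, because `Z(x_a,…,x_b)` is the determinant of the principal submatrix of `M(x)` on the
rows `a,…,b`, and principal submatrices of a positive semidefinite matrix are positive semidefinite.
-/

open scoped ComplexOrder

theorem List.range'_infix_range' {a b m n : ℕ} (ha : a ≤ b) (h : b + m ≤ a + n) :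
    List.range' b m <:+: List.range' a n := by
  obtain ⟨c, rfl⟩ := Nat.exists_eq_add_of_le ha
  obtain ⟨d, hd⟩ := Nat.exists_eq_add_of_le h
  refine ⟨List.range' a c, List.range' (a + c + m) d, ?_⟩
  rw [List.range'_append_1, Nat.add_assoc, List.range'_append_1]
  congr 1
  omega

section CommRing

variable {R : Type*} [CommRing R]

theorem map_Zrev {S : Type*} [CommRing S] (f : R →+* S) : ∀ l : List R,
    f (Zrev l) = Zrev (l.map f)
  | [] => by simp [Zrev]
  | [x] => by simp [Zrev]
  | x :: y :: l => by simp [Zrev, map_Zrev f (y :: l), map_Zrev f l]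

theorem Zc_reverse (l : List R) : Zc l.reverse = Zrev l := by
  rw [Zc, List.reverse_reverse]

theorem triMat_submatrix_of_val_eq {m n : ℕ} (y : Fin n → R) (e : Fin m → Fin n) (s : ℕ)
    (he : ∀ k, (e k : ℕ) = s + k) : (triMat y).submatrix e e = triMat (y ∘ e) := by
  ext i j
  simp only [Matrix.submatrix_apply, triMat, Matrix.of_apply, Function.comp_apply, Fin.ext_iff,
    he]
  congr 1
  · simp
  · congr 1
    apply propext
    omega

theorem det_triMat_submatrix_succ_succAbove_one {m : ℕ} (y : Fin (m + 2) → R) :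
    ((triMat y).submatrix Fin.succ (Fin.succAbove 1)).det =
      -(triMat (y ∘ Fin.succ ∘ Fin.succ)).det := by
  have hcol : ∀ i : Fin m, (triMat y) i.succ.succ 0 = 0 := fun i => by
    simp [triMat, Fin.ext_iff]
  have hsucc : Fin.succAbove (1 : Fin (m + 2)) ∘ Fin.succ = Fin.succ ∘ Fin.succ :=
    funext Fin.one_succAbove_succ
  rw [Matrix.det_succ_column_zero, Fin.sum_univ_succ]
  simp only [Matrix.submatrix_apply, Fin.one_succAbove_zero, hcol, Fin.succAbove_zero,
    Matrix.submatrix_submatrix, hsucc, mul_zero, zero_mul, Finset.sum_const_zero, add_zero]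
  rw [triMat_submatrix_of_val_eq y (Fin.succ ∘ Fin.succ) 2 fun k => by simp; omega]
  simp [triMat, Fin.ext_iff]

theorem det_triMat_succ_succ {m : ℕ} (y : Fin (m + 2) → R) :
    (triMat y).det =
      y 0 * (triMat (y ∘ Fin.succ)).det - (triMat (y ∘ Fin.succ ∘ Fin.succ)).det := by
  have hrow : ∀ j : Fin m, (triMat y) 0 j.succ.succ = 0 := fun j => by
    simp [triMat, Fin.ext_iff]
  rw [Matrix.det_succ_row_zero, Fin.sum_univ_succ, Fin.sum_univ_succ]
  simp only [hrow, mul_zero, zero_mul, Finset.sum_const_zero, add_zero, Fin.succAbove_zero,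
    Fin.succ_zero_eq_one, det_triMat_submatrix_succ_succAbove_one,
    triMat_submatrix_of_val_eq y Fin.succ 1 fun k => by simp; omega]
  simp [triMat, Fin.ext_iff]
  ring

theorem det_triMat : ∀ {m : ℕ} (y : Fin m → R), (triMat y).det = Zrev (List.ofFn y)
  | 0, y => by simp [Zrev]
  | 1, y => by simp [triMat, Zrev]
  | m + 2, y => by
    rw [det_triMat_succ_succ, det_triMat, det_triMat]
    simp [List.ofFn_succ, Zrev, Function.comp_def]

end CommRing

theorem Zrev_nonneg_of_isInfix {𝕜 : Type*} [RCLike 𝕜] {n : ℕ} {y : Fin n → 𝕜}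
    (hy : (triMat y).PosSemidef) {l : List 𝕜} (hl : l <:+: List.ofFn y) : 0 ≤ Zrev l := by
  obtain ⟨s, t, hst⟩ := hl
  have hlen : s.length + l.length ≤ n := by
    have := congrArg List.length hst
    simp only [List.length_append, List.length_ofFn] at this
    omega
  let e : Fin l.length → Fin n := fun k => ⟨s.length + k, by omega⟩
  have hle : l = List.ofFn (y ∘ e) := by
    apply List.ext_getElem (by simp)
    intro k hk _
    have := List.getElem_ofFn (f := y) (i := s.length + k) (by simp; omega)
    simp only [← hst] at this
    simp [e, ← this, List.getElem_append_right, List.getElem_append_left hk]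
  rw [hle, ← det_triMat, ← triMat_submatrix_of_val_eq y e s.length fun _ => rfl]
  exact (hy.submatrix e).det_nonneg

theorem Zrev_nonneg_of_isInfix_intCast {n : ℕ} {y : Fin n → ℤ}
    (hy : (triMat fun i => (y i : ℝ)).PosSemidef) {l : List ℤ} (hl : l <:+: List.ofFn y) :
    0 ≤ Zrev l := by
  have := Zrev_nonneg_of_isInfix hy (l := l.map (Int.castRingHom ℝ))
    (by simpa [List.map_ofFn, Function.comp_def] using hl.map (Int.castRingHom ℝ))
  rw [← map_Zrev] at this
  simpa using this

theorem Zrev_cons_mul_sub_Zrev_mul_le {R : Type*} [CommRing R] [PartialOrder R] [IsOrderedRing R]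
    (ν : ℕ → R) :
    ∀ (y : R) (l : List R), (∀ s, s <:+ l → 0 ≤ Zrev s) →
      (∀ k (hk : k < l.length + 1), (y :: l)[k] * ν (k + 1) - ν k ≤ ν (k + 2)) →
      Zrev (y :: l) * ν 1 - Zrev l * ν 0 ≤ ν (l.length + 2)
  | y, [], _, hrec => by
    have h0 := hrec 0 (by simp)
    simpa [Zrev] using h0
  | y, z :: l, hnonneg, hrec => by
    have ih := Zrev_cons_mul_sub_Zrev_mul_le (ν ∘ (· + 1)) z l
      (fun s hs => hnonneg s (hs.trans (List.suffix_cons z l)))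
      (fun k hk => hrec (k + 1) (by simpa using hk))
    have h0 := hrec 0 (by simp)
    simp only [List.getElem_cons_zero, zero_add] at h0
    simp only [Function.comp_apply, List.length_cons] at ih ⊢
    calc Zrev (y :: z :: l) * ν 1 - Zrev (z :: l) * ν 0
        = Zrev (z :: l) * (y * ν 1 - ν 0) - Zrev l * ν 1 := by simp only [Zrev]; ring
      _ ≤ Zrev (z :: l) * ν 2 - Zrev l * ν 1 :=
        sub_le_sub_right (mul_le_mul_of_nonneg_left h0 (hnonneg _ List.suffix_rfl)) _
      _ ≤ ν (l.length + 1 + 2) := ih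

/-- for an admissible `x` and integers `ν_i` with
`ν_{i+1} ≥ x_i·ν_i - ν_{i-1}` for `1 ≤ i ≤ n`, one has
`ν_{i+1} ≥ Z_i(x_i,…,x_1)·ν_1 - Z_{i-1}(x_i,…,x_2)·ν_0`. -/
theorem nu_ge_of_admissible (n : ℕ) (x : ℕ → ℕ)
    (hadm : Admissible fun i : Fin n => x (i.1 + 1))
    (ν : ℕ → ℤ)
    (hrec : ∀ i, 1 ≤ i → i ≤ n → (x i : ℤ) * ν i - ν (i - 1) ≤ ν (i + 1)) :
    ∀ i, 1 ≤ i → i ≤ n →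
      Zc (((List.range' 1 i).map fun j => (x j : ℤ)).reverse) * ν 1 -
        Zc (((List.range' 2 (i - 1)).map fun j => (x j : ℤ)).reverse) * ν 0 ≤ ν (i + 1) := by
  intro i hi hin
  obtain ⟨j, rfl⟩ : ∃ j, i = j + 1 := ⟨i - 1, by omega⟩
  set L := (List.range' 2 j).map fun t => (x t : ℤ)
  have hpsd : (triMat fun i : Fin n => ((x (i.1 + 1) : ℤ) : ℝ)).PosSemidef := by
    simpa using hadm.1
  have hrange : (List.range' 1 n).map (fun t => (x t : ℤ)) =
      List.ofFn fun i : Fin n => (x (i.1 + 1) : ℤ) :=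
    List.ext_getElem (by simp) (by simp [add_comm])
  have hL : L <:+: List.ofFn fun i : Fin n => (x (i.1 + 1) : ℤ) :=
    hrange ▸ (List.range'_infix_range' (by omega) (by omega)).map _
  have := Zrev_cons_mul_sub_Zrev_mul_le ν (x 1) L
    (fun s hs => Zrev_nonneg_of_isInfix_intCast hpsd (hs.isInfix.trans hL)) fun k hk => by
      simp only [L, List.length_map, List.length_range'] at hk
      rcases k with _ | k
      · simpa using hrec 1 le_rfl (by omega)
      · simpa [L, Nat.add_comm 2 k] using hrec (k + 2) (by omega) (by omega)
  simp only [Zc_reverse, List.range'_succ, Nat.add_sub_cancel, List.map_cons]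
  simpa [L] using this
end

section
/- Let K be a field, let a_1, …, a_r be positive integers, and let z_0, z_1, …, z_{r+1} ∈ K satisfy z_0 ≠ 0, z_1 ≠ 0, and z_{i-1}·z_{i+1} = z_i^{a_i} for all 1 ≤ i ≤ r. Then for every 1 ≤ i ≤ r+1 one has z_i · z_0^{Z_{i-2}(a_2, …, a_{i-1})} = z_1^{Z_{i-1}(a_1, …, a_{i-1})} (equivalently, z_i = z_1^{Z_{i-1}(a_1,…,a_{i-1})} · z_0^{−Z_{i-2}(a_2,…,a_{i-1})}). -/
/-! Write `zᵢ · z₀^{qᵢ} = z₁^{pᵢ}`. Since `zᵢ₊₁ = zᵢ^{aᵢ} / zᵢ₋₁`, both exponent sequences obey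
the continuant recurrence `eᵢ₊₁ = aᵢ eᵢ - eᵢ₋₁`. Started from `(p₀, q₀) = (0, -1)` and
`(p₁, q₁) = (1, 0)`, they are `pᵢ = Z_{i-1}(a₁, …)` and `qᵢ = Z_{i-2}(a₂, …)`, and the claim follows
by two-step induction. -/

lemma Zc_append_pair {R : Type*} [CommRing R] (l : List R) (y x : R) :
    Zc (l ++ [y, x]) = x * Zc (l ++ [y]) - Zc l := by
  simp only [Zc, List.reverse_append, List.reverse_cons, List.reverse_nil, List.nil_append,
    List.cons_append]
  rfl

lemma Zc_map_range'_add_two {R : Type*} [CommRing R] (f : ℕ → R) (s n : ℕ) :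
    Zc ((List.range' s (n + 2)).map f)
      = f (s + n + 1) * Zc ((List.range' s (n + 1)).map f) - Zc ((List.range' s n).map f) := by
  rw [List.range'_concat, List.range'_concat, List.map_append, List.map_append,
    List.append_assoc]
  simpa [Nat.add_assoc] using Zc_append_pair ((List.range' s n).map f) (f (s + n)) (f (s + n + 1))

section Field

variable {K : Type*} [Field K] {u v : K}

lemma mul_zpow_eq_zpow_step (hu : u ≠ 0) (hv : v ≠ 0) {x y w : K} {m : ℕ} {p q p' q' : ℤ}
    (hx : x * u ^ q' = v ^ p') (hy : y * u ^ q = v ^ p) (hxw : x * w = y ^ m) :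
    w * u ^ (m * q - q') = v ^ (m * p - p') := by
  have hxu : x * u ^ q' ≠ 0 := hx ▸ zpow_ne_zero _ hv
  refine mul_left_cancel₀ hxu ?_
  calc x * u ^ q' * (w * u ^ (m * q - q')) = x * w * (u ^ q) ^ m := by
        rw [zpow_sub₀ hu, mul_comm (m : ℤ) q, zpow_mul, zpow_natCast]; field_simp
    _ = (y * u ^ q) ^ m := by rw [hxw, mul_pow]
    _ = x * u ^ q' * v ^ (m * p - p') := by
        rw [hy, hx, ← zpow_natCast, ← zpow_mul, ← zpow_add₀ hv]; ring_nf

lemma mul_zpow_eq_zpow_of_recurrence (hu : u ≠ 0) (hv : v ≠ 0) {w : ℕ → K} {c : ℕ → ℕ}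
    {p q : ℕ → ℤ} {N : ℕ}
    (hp : ∀ n, p (n + 2) = c (n + 1) * p (n + 1) - p n)
    (hq : ∀ n, q (n + 2) = c (n + 1) * q (n + 1) - q n)
    (hw : ∀ n, n + 2 ≤ N → w n * w (n + 2) = w (n + 1) ^ c (n + 1))
    (h0 : w 0 * u ^ q 0 = v ^ p 0) (h1 : w 1 * u ^ q 1 = v ^ p 1) :
    ∀ n ≤ N, w n * u ^ q n = v ^ p n := by
  intro n
  induction n using Nat.twoStepInduction with
  | zero => exact fun _ => h0
  | one => exact fun _ => h1
  | more n ih ih' =>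
    intro hn
    rw [hp, hq]
    exact mul_zpow_eq_zpow_step hu hv (ih (by omega)) (ih' (by omega)) (hw n hn)

end Field

theorem z_eq_monomial_general {K : Type*} [Field K] (r : ℕ) (a : ℕ → ℕ)
    (z : ℕ → K) (hz0 : z 0 ≠ 0) (hz1 : z 1 ≠ 0)
    (hrec : ∀ i, 1 ≤ i → i ≤ r → z (i - 1) * z (i + 1) = z i ^ a i) :
    ∀ i, 1 ≤ i → i ≤ r + 1 →
      z i * z 0 ^ (if i = 1 then (0 : ℤ)
          else Zc ((List.range' 2 (i - 2)).map fun j => (a j : ℤ)))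
        = z 1 ^ Zc ((List.range' 1 (i - 1)).map fun j => (a j : ℤ)) := by
  let f : ℕ → ℤ := fun j => a j
  have key := mul_zpow_eq_zpow_of_recurrence hz0 hz1 (w := z) (c := a) (N := r + 1)
    (p := fun n => if n = 0 then 0 else Zc ((List.range' 1 (n - 1)).map f))
    (q := fun n => if n = 0 then -1 else if n = 1 then 0 else Zc ((List.range' 2 (n - 2)).map f))
    (fun n => by
      rcases n with _ | n
      · simp [Zc, Zrev, f]
      · simpa [add_comm 1 n] using Zc_map_range'_add_two f 1 n)
    (fun n => by
      rcases n with _ | _ | n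
      · simp [Zc, Zrev]
      · simp [Zc, Zrev, f]
      · simpa [add_comm 2 n, add_assoc] using Zc_map_range'_add_two f 2 n)
    (fun n hn => by simpa using hrec (n + 1) (by omega) (by omega))
    (by simp [hz0]) (by simp [Zc, Zrev])
  intro i hi hir
  simpa [Nat.pos_iff_ne_zero.mp hi] using key i hir

/-- if `z_0 ≠ 0`, `z_1 ≠ 0` and `z_{i-1} z_{i+1} = z_i^{a_i}` for `1 ≤ i ≤ r`,
then `z_i · z_0^{Z_{i-2}(a_2,…,a_{i-1})} = z_1^{Z_{i-1}(a_1,…,a_{i-1})}` for `1 ≤ i ≤ r+1`. -/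
theorem z_eq_monomial {K : Type*} [Field K] (r : ℕ) (a : ℕ → ℕ)
    (ha : ∀ i, 1 ≤ i → i ≤ r → 0 < a i)
    (z : ℕ → K) (hz0 : z 0 ≠ 0) (hz1 : z 1 ≠ 0)
    (hrec : ∀ i, 1 ≤ i → i ≤ r → z (i - 1) * z (i + 1) = z i ^ a i) :
    ∀ i, 1 ≤ i → i ≤ r + 1 →
      z i * z 0 ^ (if i = 1 then (0 : ℤ)
          else Zc ((List.range' 2 (i - 2)).map fun j => (a j : ℤ)))
        = z 1 ^ Zc ((List.range' 1 (i - 1)).map fun j => (a j : ℤ)) :=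
  z_eq_monomial_general r a z hz0 hz1 hrec
end

section
/- Let a = (a_1, …, a_r) with all a_i ≥ 2 integers, and let k = (k_1, …, k_r) ∈ ℕ^r be admissible with Z_r(k_1, …, k_r) = 0 and k_i ≤ a_i for all i. Then there exist polynomials P_0, P_1, …, P_{r+1} in ℤ[t, z_0, z_1] with P_0 = 1 and P_1 = z_1, satisfying the inductive relations P_{i-1}·P_{i+1} = P_i^{a_i} + t·P_i^{k_i}·z_0^{(a_i − k_i)·Z_{i-2}(a_2, …, a_{i-1})} for all 1 ≤ i ≤ r, and such that z_0 does not divide P_i for any i. (In particular, in the fraction field the elements z_i := z_0^{−Z_{i-2}(a_2,…,a_{i-1})}·P_i solve the deformed equations z_{i-1}z_{i+1} = z_i^{a_i} + t·z_i^{k_i}.) -/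
open Finset Matrix

/-- Shifted by one from the paper: `continuant c (n + 1) = Z_n(c 0, …, c (n - 1))`, and
`continuant c 0 = Z_{-1} = 0`. -/
def continuant {R : Type*} [CommRing R] (c : ℕ → R) : ℕ → R
  | 0 => 0
  | 1 => 1
  | n + 2 => c n * continuant c (n + 1) - continuant c n

section Continuant

variable {R S : Type*} [CommRing R] [CommRing S]

@[simp] lemma continuant_zero (c : ℕ → R) : continuant c 0 = 0 := rfl

@[simp] lemma continuant_one (c : ℕ → R) : continuant c 1 = 1 := rfl

lemma continuant_add_two (c : ℕ → R) (n : ℕ) :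
    continuant c (n + 2) = c n * continuant c (n + 1) - continuant c n := rfl

lemma map_continuant (f : R →+* S) (c : ℕ → R) :
    ∀ n, f (continuant c n) = continuant (f ∘ c) n
  | 0 => map_zero f
  | 1 => map_one f
  | n + 2 => by
    simp only [continuant_add_two, map_sub, map_mul, map_continuant f c n,
      map_continuant f c (n + 1), Function.comp_apply]

lemma triMat_submatrix {n m : ℕ} (c : Fin n → R) (e : Fin m → Fin n) (d : ℕ)
    (he : ∀ p, (e p : ℕ) = d + p) :
    (triMat c).submatrix e e = triMat (c ∘ e) := by
  ext p q
  simp only [submatrix_apply, triMat, of_apply, Fin.ext_iff, he, Function.comp_apply]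
  by_cases hpq : (p : ℕ) = q
  · simp [Fin.ext_iff.mpr hpq]
  · rw [if_neg (by omega), if_neg hpq]
    exact if_congr (by omega) rfl rfl

lemma triMat_mulVec_continuant (c : ℕ → R) (n : ℕ) (p : Fin n) :
    (triMat (fun i : Fin n => c i) *ᵥ fun q => continuant c (q + 1)) p =
      if (p : ℕ) + 1 = n then continuant c (n + 1) else 0 := by
  set V := continuant c
  have hsummand : ∀ q : Fin n, triMat (fun i : Fin n => c i) p q * V (q + 1) =
      ((if q = p then c p * V (p + 1) else 0) - (if (q : ℕ) = p + 1 then V (p + 2) else 0)) -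
        (if (q : ℕ) + 1 = p then V p else 0) := by
    rintro ⟨q, hq⟩
    obtain ⟨p, hp⟩ := p
    simp only [triMat, of_apply, Fin.ext_iff]
    split_ifs <;> subst_vars <;> first | omega | ring
  have hleft : ∑ q : Fin n, (if (q : ℕ) + 1 = p then V p else 0) = V p := by
    rw [Fin.sum_univ_eq_sum_range (fun q => if q + 1 = (p : ℕ) then V p else 0)]
    obtain ⟨p, hp⟩ := p
    cases p with
    | zero => simp [V]
    | succ p =>
      simp only [Nat.add_right_cancel_iff, sum_ite_eq', mem_range, ite_eq_left_iff, not_lt]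
      omega
  have hright : ∑ q : Fin n, (if (q : ℕ) = p + 1 then V (p + 2) else 0) =
      if (p : ℕ) + 1 < n then V (p + 2) else 0 := by
    rw [Fin.sum_univ_eq_sum_range (fun q => if q = (p : ℕ) + 1 then V (p + 2) else 0)]
    simp
  simp only [mulVec, dotProduct, hsummand, sum_sub_distrib, sum_ite_eq', mem_univ, if_true,
    hleft, hright]
  have hrec : V (p + 2) = c p * V (p + 1) - V p := continuant_add_two c p
  by_cases hn : (p : ℕ) + 1 = n
  · rw [if_neg (by omega), if_pos hn, show n + 1 = p + 2 by omega, hrec]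
    ring
  · rw [if_pos (by omega), if_neg hn, hrec]
    ring

end Continuant

section PosSemidef

variable {c : ℕ → ℝ}

lemma continuant_succ_nonneg {n : ℕ} (h : (triMat fun i : Fin n => c i).PosSemidef)
    (hn : 0 ≤ continuant c n) : 0 ≤ continuant c (n + 1) := by
  cases n with
  | zero => simp
  | succ n =>
    let v : Fin (n + 1) → ℝ := fun q => continuant c (q + 1)
    have hMv : ∀ p, (triMat (fun i : Fin (n + 1) => c i) *ᵥ v) p = _ :=
      triMat_mulVec_continuant c (n + 1)
    have hform : star v ⬝ᵥ (triMat (fun i : Fin (n + 1) => c i) *ᵥ v) =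
        continuant c (n + 1) * continuant c (n + 2) := by
      rw [dotProduct, Fin.sum_univ_castSucc]
      simp [hMv, v, fun i : Fin n => i.is_lt.ne]
    by_contra hneg
    have hzero : continuant c (n + 1) = 0 := by
      nlinarith [h.dotProduct_mulVec_nonneg v]
    have hker := (h.dotProduct_mulVec_zero_iff v).1 (by rw [hform, hzero, zero_mul])
    have hlast := congrFun hker (Fin.last n)
    rw [hMv, if_pos (by simp)] at hlast
    exact hneg hlast.ge

lemma continuant_nonneg {n : ℕ} (h : (triMat fun i : Fin n => c i).PosSemidef) :
    ∀ m ≤ n + 1, 0 ≤ continuant c m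
  | 0, _ => le_rfl
  | m + 1, hm => by
    have hsub := triMat_submatrix (fun i : Fin n => c i) (Fin.castLE (by omega : m ≤ n)) 0
      (fun p => by simp)
    refine continuant_succ_nonneg ?_ (continuant_nonneg h m (by omega))
    simpa [hsub, Function.comp_def] using h.submatrix (Fin.castLE (by omega : m ≤ n))

end PosSemidef

section FactorSeq

variable {R S : Type*} [CommSemiring R] [CommSemiring S]

/-- `factorSeq x u b e j` is `F_{j+1}` and `prodSeq x u b e m = ∏_{j < m} F_{j+1}^{e j m}` is
`P_m`, so that `F_{m+1} = P_m^{b m} + u m` for `m ≥ 1` and `F_1 = x`. -/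
def factorSeq (x : R) (u : ℕ → R) (b : ℕ → ℕ) (e : ℕ → ℕ → ℕ) : ℕ → R
  | 0 => x
  | n + 1 => (∏ j : Fin (n + 1), factorSeq x u b e j ^ e j (n + 1)) ^ b (n + 1) + u (n + 1)

def prodSeq (x : R) (u : ℕ → R) (b : ℕ → ℕ) (e : ℕ → ℕ → ℕ) (m : ℕ) : R :=
  ∏ j ∈ range m, factorSeq x u b e j ^ e j m

variable (x : R) (u : ℕ → R) (b : ℕ → ℕ) (e : ℕ → ℕ → ℕ)

lemma factorSeq_succ (n : ℕ) :
    factorSeq x u b e (n + 1) = prodSeq x u b e (n + 1) ^ b (n + 1) + u (n + 1) := by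
  rw [factorSeq, prodSeq, Fin.prod_univ_eq_prod_range (fun j => factorSeq x u b e j ^ e j (n + 1))]

lemma prodSeq_eq_prod_range {m N : ℕ} (hmN : m ≤ N) (he : ∀ j, m ≤ j → e j m = 0) :
    prodSeq x u b e m = ∏ j ∈ range N, factorSeq x u b e j ^ e j m := by
  refine prod_subset (range_subset_range.2 hmN) fun j _ hj => ?_
  rw [he j (by simpa using hj), pow_zero]

lemma prodSeq_mul_prodSeq (he : ∀ j m, m ≤ j → e j m = 0) (k m : ℕ)
    (hrec : ∀ j ≤ m + 1, e j m + e j (m + 2) = k * e j (m + 1) + if j = m + 1 then 1 else 0) :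
    prodSeq x u b e m * prodSeq x u b e (m + 2) =
      prodSeq x u b e (m + 1) ^ k * factorSeq x u b e (m + 1) := by
  calc prodSeq x u b e m * prodSeq x u b e (m + 2)
      = ∏ j ∈ range (m + 2), factorSeq x u b e j ^ (e j m + e j (m + 2)) := by
        rw [prodSeq_eq_prod_range x u b e (by omega : m ≤ m + 2) (he · m), prodSeq,
          ← prod_mul_distrib]
        simp_rw [pow_add]
    _ = ∏ j ∈ range (m + 2), (factorSeq x u b e j ^ e j (m + 1)) ^ k *
          factorSeq x u b e j ^ (if m + 1 = j then 1 else 0) :=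
        prod_congr rfl fun j hj => by
          rw [hrec j (Nat.lt_succ_iff.1 (mem_range.1 hj)), pow_add, ← pow_mul, mul_comm k]
          simp only [eq_comm]
    _ = prodSeq x u b e (m + 1) ^ k * factorSeq x u b e (m + 1) := by
        rw [prod_mul_distrib, prod_pow, prod_pow_boole, if_pos (by simp),
          ← prodSeq_eq_prod_range x u b e (by omega : m + 1 ≤ m + 2) (he · (m + 1))]

lemma map_factorSeq (φ : R →+* S) (n : ℕ) :
    φ (factorSeq x u b e n) = factorSeq (φ x) (φ ∘ u) b e n := by
  induction n using Nat.strong_induction_on with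
  | _ n ih =>
    cases n with
    | zero => simp only [factorSeq]
    | succ n =>
      simp only [factorSeq, map_add, map_pow, map_prod, Function.comp_apply]
      congr 2
      exact prod_congr rfl fun j _ => by rw [ih j j.is_lt]

lemma map_prodSeq (φ : R →+* S) (m : ℕ) :
    φ (prodSeq x u b e m) = prodSeq (φ x) (φ ∘ u) b e m := by
  simp only [prodSeq, map_prod, map_pow, map_factorSeq]

end FactorSeq

section Positivity

variable {R : Type*} [CommSemiring R] [PartialOrder R] [IsStrictOrderedRing R]
  {x : R} {u : ℕ → R} (b : ℕ → ℕ) (e : ℕ → ℕ → ℕ)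

lemma factorSeq_pos (hx : 0 < x) (hu : ∀ n, 0 ≤ u n) (n : ℕ) : 0 < factorSeq x u b e n := by
  induction n using Nat.strong_induction_on with
  | _ n ih =>
    cases n with
    | zero => simpa only [factorSeq] using hx
    | succ n =>
      rw [factorSeq_succ]
      exact add_pos_of_pos_of_nonneg
        (pow_pos (prod_pos fun j hj => pow_pos (ih j (mem_range.1 hj)) _) _) (hu _)

lemma prodSeq_pos (hx : 0 < x) (hu : ∀ n, 0 ≤ u n) (m : ℕ) : 0 < prodSeq x u b e m :=
  prod_pos fun j _ => pow_pos (factorSeq_pos b e hx hu j) _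

lemma not_dvd_prodSeq {A : Type*} [CommSemiring A] {x : A} {u : ℕ → A} (φ : A →+* R) {y : A}
    (hy : φ y = 0) (hx : 0 < φ x) (hu : ∀ n, 0 ≤ φ (u n)) (m : ℕ) :
    ¬ y ∣ prodSeq x u b e m := by
  rintro ⟨q, hq⟩
  have hpos := prodSeq_pos (u := φ ∘ u) b e hx hu m
  rw [← map_prodSeq, hq, map_mul, hy, zero_mul] at hpos
  exact hpos.false

end Positivity

/-- The exponent of `F_{j+1}` in `P_m`, namely `Z_{m-j-1}(k_{j+1}, …, k_{m-1})`, read as `0`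
when `m ≤ j`. -/
def continuantExponent (k : ℕ → ℕ) (j m : ℕ) : ℕ :=
  (continuant (fun i => (k (j + 1 + i) : ℤ)) (m - j)).toNat

section Exponent

variable {k : ℕ → ℕ}

lemma continuantExponent_of_le {j m : ℕ} (hmj : m ≤ j) : continuantExponent k j m = 0 := by
  simp [continuantExponent, Nat.sub_eq_zero_of_le hmj]

variable {r : ℕ} (hM : (triMat fun i : Fin r => (k (i + 1) : ℝ)).PosSemidef)
include hM

lemma continuant_shift_nonneg {j l : ℕ} (hjl : j + l ≤ r + 1) :
    0 ≤ continuant (fun i => (k (j + 1 + i) : ℤ)) l := by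
  obtain _ | l := l
  · exact le_rfl
  let e : Fin l → Fin r := fun p => ⟨j + p, by omega⟩
  have hsub := triMat_submatrix (fun i : Fin r => (k (i + 1) : ℝ)) e j fun _ => rfl
  have hpsd : (triMat fun p : Fin l => (k (j + 1 + p) : ℝ)).PosSemidef := by
    simpa [hsub, Function.comp_def, e, add_right_comm] using hM.submatrix e
  have := continuant_nonneg (c := fun i => (k (j + 1 + i) : ℝ)) hpsd (l + 1) le_rfl
  have hcast := map_continuant (Int.castRingHom ℝ) (fun i => (k (j + 1 + i) : ℤ)) (l + 1)
  simp only [Function.comp_def, eq_intCast, Int.cast_natCast] at hcast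
  exact_mod_cast hcast ▸ this

lemma continuantExponent_add {j m : ℕ} (hm : m + 1 ≤ r) (hj : j ≤ m + 1) :
    continuantExponent k j m + continuantExponent k j (m + 2) =
      k (m + 1) * continuantExponent k j (m + 1) + if j = m + 1 then 1 else 0 := by
  rcases (show j = m + 1 ∨ j ≤ m by omega) with rfl | hjm
  · simp [continuantExponent, show m + 2 - (m + 1) = 1 by omega]
  obtain ⟨l, rfl⟩ := Nat.exists_eq_add_of_le hjm
  have hcast : ∀ n, j + n ≤ r + 1 →
      ((continuant (fun i => (k (j + 1 + i) : ℤ)) n).toNat : ℤ) =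
        continuant (fun i => (k (j + 1 + i) : ℤ)) n :=
    fun n hn => Int.toNat_of_nonneg (continuant_shift_nonneg hM hn)
  rw [if_neg (by omega)]
  zify
  simp only [continuantExponent, show j + l + 2 - j = l + 2 by omega,
    show j + l + 1 - j = l + 1 by omega, Nat.add_sub_cancel_left]
  rw [hcast l (by omega), hcast (l + 1) (by omega), hcast (l + 2) (by omega),
    continuant_add_two, show j + 1 + l = j + l + 1 by omega]
  ring

end Exponent

theorem exists_P_polys_general (r : ℕ) (a k : ℕ → ℕ)
    (hk : ∀ i, 1 ≤ i → i ≤ r → k i ≤ a i)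
    (hadm : Admissible fun i : Fin r => k (i.1 + 1)) :
    ∃ P : ℕ → MvPolynomial (Fin 3) ℤ,
      P 0 = 1 ∧ P 1 = MvPolynomial.X 2 ∧
      (∀ i, 1 ≤ i → i ≤ r →
        P (i - 1) * P (i + 1) =
          P i ^ a i +
            MvPolynomial.X 0 * P i ^ k i *
              MvPolynomial.X 1 ^
                ((a i - k i) *
                  (if i = 1 then 0
                    else (Zc ((List.range' 2 (i - 2)).map fun j => (a j : ℤ))).toNat))) ∧
      (∀ i, i ≤ r + 1 → ¬ MvPolynomial.X 1 ∣ P i) := by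
  set u : ℕ → MvPolynomial (Fin 3) ℤ := fun i => MvPolynomial.X 0 * MvPolynomial.X 1 ^
    ((a i - k i) *
      (if i = 1 then 0 else (Zc ((List.range' 2 (i - 2)).map fun j => (a j : ℤ))).toNat))
  set P := prodSeq (MvPolynomial.X 2) u (fun i => a i - k i) (continuantExponent k)
  refine ⟨P, by simp [P, prodSeq], by simp [P, prodSeq, factorSeq, continuantExponent], ?_,
    fun i _ => ?_⟩
  · intro i hi hir
    obtain ⟨m, rfl⟩ : ∃ m, i = m + 1 := ⟨i - 1, by omega⟩
    rw [Nat.add_sub_cancel, prodSeq_mul_prodSeq _ _ _ _ (fun _ _ => continuantExponent_of_le)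
      (k (m + 1)) m fun j hj => continuantExponent_add hadm.1 hir hj, factorSeq_succ, mul_add,
      ← pow_add, Nat.add_sub_cancel' (hk _ hi hir)]
    ring
  · refine not_dvd_prodSeq _ _ (MvPolynomial.eval ![1, 0, 1]) (by simp) (by simp)
      (fun n => ?_) i
    simp only [u, map_mul, map_pow, MvPolynomial.eval_X]
    exact mul_nonneg (by simp) (pow_nonneg (by simp) _)

/-- for `a_i ≥ 2` and `k ∈ K_r(a)` (admissible, representing `0`, `k ≤ a`),
there exist polynomials `P_i ∈ ℤ[t,z_0,z_1]` (here `t = X 0`, `z_0 = X 1`, `z_1 = X 2`) with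
`P_0 = 1`, `P_1 = z_1`,
`P_{i-1}P_{i+1} = P_i^{a_i} + t·P_i^{k_i}·z_0^{(a_i-k_i)·Z_{i-2}(a_2,…,a_{i-1})}`,
and `z_0 ∤ P_i` for all `i`. -/
theorem exists_P_polys (r : ℕ) (a k : ℕ → ℕ)
    (ha : ∀ i, 1 ≤ i → i ≤ r → 2 ≤ a i)
    (hk : ∀ i, 1 ≤ i → i ≤ r → k i ≤ a i)
    (hadm : Admissible fun i : Fin r => k (i.1 + 1))
    (hk0 : Zc ((List.range' 1 r).map fun i => (k i : ℤ)) = 0) :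
    ∃ P : ℕ → MvPolynomial (Fin 3) ℤ,
      P 0 = 1 ∧ P 1 = MvPolynomial.X 2 ∧
      (∀ i, 1 ≤ i → i ≤ r →
        P (i - 1) * P (i + 1) =
          P i ^ a i +
            MvPolynomial.X 0 * P i ^ k i *
              MvPolynomial.X 1 ^
                ((a i - k i) *
                  (if i = 1 then 0
                    else (Zc ((List.range' 2 (i - 2)).map fun j => (a j : ℤ))).toNat))) ∧
      (∀ i, i ≤ r + 1 → ¬ MvPolynomial.X 1 ∣ P i) :=
  exists_P_polys_general r a k hk hadm
end
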